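/- arXiv:2303.04359 — 3 statements merged into one kernel-verified Lean document; each statement's English description precedes it below -/
import Mathlib

section
/- The Reuleaux triangle T — the intersection of the three closed unit disks centered at the three vertices of an equilateral triangle of side length 1 — is a convex body of constant width 1, and its area (two-dimensional Lebesgue measure) equals (π − √3)/2. -/
open Real MeasureTheory ENNReal

/-- The direction vector `u θ = (cos θ, sin θ)` in the Euclidean plane. -/
noncomputable def u (θ : ℝ) : EuclideanSpace ℝ (Fin 2) := !₂[Real.cos θ, Real.sin θ]

/-- `h` is the support function of `K`: for every direction `θ`,
`h θ` is the maximum of `x · u θ` over `x ∈ K`. -/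
def IsSupportFn (K : Set (EuclideanSpace ℝ (Fin 2))) (h : ℝ → ℝ) : Prop :=
  ∀ θ : ℝ, IsGreatest ((fun x => (inner ℝ x (u θ) : ℝ)) '' K) (h θ)

/-- The Reuleaux triangle: the intersection of the three closed unit disks centered at
the vertices `(1/2, 1/(2√3))`, `(−1/2, 1/(2√3))`, `(0, −1/√3)` of an equilateral triangle
of side length 1. -/
noncomputable def ReuleauxTriangle : Set (EuclideanSpace ℝ (Fin 2)) :=
  Metric.closedBall (!₂[1/2, 1/(2*Real.sqrt 3)] : EuclideanSpace ℝ (Fin 2)) 1 ∩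
  Metric.closedBall (!₂[-(1/2), 1/(2*Real.sqrt 3)] : EuclideanSpace ℝ (Fin 2)) 1 ∩
  Metric.closedBall (!₂[0, -(1/Real.sqrt 3)] : EuclideanSpace ℝ (Fin 2)) 1

/-! The vertices are `(1/√3) • u (2mπ/3 + π/6)`, so consecutive vertices differ by the unit vectors
`u (2mπ/3)`. For every `θ`, `u θ` or `-u θ` lies in the cone spanned by the two edges at some
vertex `a`. Then `a` maximizes `⟪·, u θ⟫` on the triangle, because the two arcs through `a` are
centred at the other vertices, while `a - u θ` lies on the opposite arc and minimizes it, since the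
triangle lies in the unit disc around `a`; so the width in direction `u θ` is `1`.

Over `|x| ≤ 1/2` the triangle is the region between the lower arcs
`y = √3/6 - √(1 - (|x| + 1/2)²)` and the upper arc `y = √(1 - x²) - √3/3`. After translating the
two halves of the lower arc, the three arcs tile `∫_{-1}^{1} √(1 - x²) = π/2`, and the constants
contribute `-√3/2`. -/

open Metric Set
open scoped RealInnerProductSpace

local notation "ℝ²" => EuclideanSpace ℝ (Fin 2)

section InnerProductSpace

variable {E : Type*} [NormedAddCommGroup E] [InnerProductSpace ℝ E]

theorem inner_sub_nonpos_of_norm_sub_le {a b x : E} (h : ‖x - b‖ ≤ ‖a - b‖) :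
    ⟪x - a, a - b⟫ ≤ 0 := by
  have h_sq : ‖x - b‖ ^ 2 = ‖x - a‖ ^ 2 + 2 * ⟪x - a, a - b⟫ + ‖a - b‖ ^ 2 := by
    rw [← norm_add_sq_real, sub_add_sub_cancel]
  nlinarith [sq_nonneg ‖x - a‖, norm_nonneg (x - b), norm_nonneg (a - b)]

theorem sub_mem_closedBall_of_half_le_inner {a b v : E} (hab : ‖a - b‖ = 1) (hv : ‖v‖ = 1)
    (h : 1 / 2 ≤ ⟪v, a - b⟫) : a - v ∈ closedBall b 1 := by
  have h_sq : ‖a - v - b‖ ^ 2 = ‖a - b‖ ^ 2 - 2 * ⟪a - b, v⟫ + ‖v‖ ^ 2 := by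
    rw [← norm_sub_sq_real, sub_right_comm]
  rw [mem_closedBall, dist_eq_norm, ← sq_le_one_iff₀ (norm_nonneg _), h_sq, hab, hv,
    real_inner_comm]
  linarith

theorem isGreatest_inner_of_vertex {K : Set E} {a v : E} (hv : ‖v‖ = 1) (ha : a ∈ K)
    (hav : a - v ∈ K) (hK : K ⊆ closedBall a 1) (hmax : ∀ x ∈ K, ⟪x, v⟫ ≤ ⟪a, v⟫) :
    IsGreatest ((fun x ↦ ⟪x, v⟫) '' K) ⟪a, v⟫ ∧
      IsGreatest ((fun x ↦ ⟪x, -v⟫) '' K) (1 - ⟪a, v⟫) := by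
  refine ⟨⟨mem_image_of_mem _ ha, ?_⟩, ⟨⟨a - v, hav, ?_⟩, ?_⟩⟩
  · rintro _ ⟨x, hx, rfl⟩
    exact hmax x hx
  · simp only [inner_neg_right, inner_sub_left, real_inner_self_eq_norm_sq, hv]
    ring
  · rintro _ ⟨x, hx, rfl⟩
    have hxa : ‖a - x‖ ≤ 1 := by simpa [dist_eq_norm'] using hK hx
    have h_cs : ⟪a - x, v⟫ ≤ 1 := by
      simpa [hv] using (real_inner_le_norm (a - x) v).trans (by rw [hv, mul_one]; exact hxa)
    simp only [inner_neg_right, inner_sub_left] at h_cs ⊢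
    linarith

end InnerProductSpace

theorem inner_u_u (α β : ℝ) : ⟪u α, u β⟫ = cos (α - β) := by
  simp [u, PiLp.inner_apply, Fin.sum_univ_two, cos_sub]
  ring

theorem norm_u (θ : ℝ) : ‖u θ‖ = 1 := by
  rw [norm_eq_sqrt_real_inner, inner_u_u, sub_self, cos_zero, sqrt_one]

theorem u_add_pi (θ : ℝ) : u (θ + π) = -u θ := by
  ext i; fin_cases i <;> simp [u]

theorem u_add_int_mul_two_pi (θ : ℝ) (n : ℤ) : u (θ + n * (2 * π)) = u θ := by
  ext i; fin_cases i <;> simp [u]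

theorem sin_smul_u_add (φ t β : ℝ) :
    sin β • u (φ + t) = sin (β - t) • u φ + sin t • u (φ + β) := by
  ext i; fin_cases i <;> simp [u, sin_sub, sin_add, cos_add] <;> ring

/-- In the plane, `u (φ + t)` is a nonnegative combination of `u φ` and `u (φ + β)`. -/
theorem inner_u_add_nonpos {y : ℝ²} {φ t β : ℝ} (hβ : β ∈ Ioo 0 π) (ht : t ∈ Icc 0 β)
    (h₀ : ⟪y, u φ⟫ ≤ 0) (hβ₀ : ⟪y, u (φ + β)⟫ ≤ 0) : ⟪y, u (φ + t)⟫ ≤ 0 := by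
  have h_comb := congrArg (⟪y, ·⟫) (sin_smul_u_add φ t β)
  simp only [inner_add_right, real_inner_smul_right] at h_comb
  have hsinβ : 0 < sin β := sin_pos_of_pos_of_lt_pi hβ.1 hβ.2
  have hsin₁ : 0 ≤ sin (β - t) :=
    sin_nonneg_of_nonneg_of_le_pi (by linarith [ht.2]) (by linarith [ht.1, hβ.2])
  have hsin₂ : 0 ≤ sin t := sin_nonneg_of_nonneg_of_le_pi ht.1 (by linarith [ht.2, hβ.2])
  nlinarith [mul_nonpos_of_nonneg_of_nonpos hsin₁ h₀, mul_nonpos_of_nonneg_of_nonpos hsin₂ hβ₀]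

theorem half_le_cos_of_abs_le {t : ℝ} (ht : |t| ≤ π / 3) : 1 / 2 ≤ cos t := by
  rw [← cos_abs, ← cos_pi_div_three]
  exact cos_le_cos_of_nonneg_of_le_pi (abs_nonneg t) (by linarith [pi_pos]) ht

noncomputable def reuleauxVertex (m : ℤ) : ℝ² := (1 / √3) • u (2 * m * π / 3 + π / 6)

theorem reuleauxVertex_add_three_mul (m n : ℤ) :
    reuleauxVertex (m + 3 * n) = reuleauxVertex m := by
  rw [reuleauxVertex, reuleauxVertex, ← u_add_int_mul_two_pi (2 * m * π / 3 + π / 6) n]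
  congr 2
  push_cast
  ring

theorem reuleauxVertex_eq_pred_or_self_or_succ (m k : ℤ) :
    reuleauxVertex k = reuleauxVertex (m - 1) ∨ reuleauxVertex k = reuleauxVertex m ∨
      reuleauxVertex k = reuleauxVertex (m + 1) := by
  have hk : k = (m - 1 + (k - m + 1) % 3) + 3 * ((k - m + 1) / 3) := by omega
  rw [hk, reuleauxVertex_add_three_mul]
  have h₀ := Int.emod_nonneg (k - m + 1) (by norm_num : (3 : ℤ) ≠ 0)
  have h₃ := Int.emod_lt_of_pos (k - m + 1) (by norm_num : (0 : ℤ) < 3)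
  interval_cases (k - m + 1) % 3
  · exact Or.inl (by rw [add_zero])
  · exact Or.inr (Or.inl (by rw [sub_add_cancel]))
  · exact Or.inr (Or.inr (by ring_nf))

theorem reuleauxVertex_sub_succ (m : ℤ) :
    reuleauxVertex m - reuleauxVertex (m + 1) = u (2 * m * π / 3) := by
  have h3 : √3 ^ 2 = 3 := sq_sqrt (by norm_num)
  have h₁ : 2 * ((m + 1 : ℤ) : ℝ) * π / 3 + π / 6 = 2 * m * π / 3 + (π - π / 6) := by
    push_cast; ring
  ext i; fin_cases i <;>
  · simp only [reuleauxVertex, h₁, u, PiLp.sub_apply, PiLp.smul_apply, smul_eq_mul]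
    simp [cos_add, sin_add, cos_pi_sub, sin_pi_sub]
    field_simp
    nlinarith [h3]

theorem reuleauxVertex_sub_pred (m : ℤ) :
    reuleauxVertex m - reuleauxVertex (m - 1) = u (2 * m * π / 3 + π / 3) := by
  have h := reuleauxVertex_sub_succ (m - 1)
  rw [sub_add_cancel] at h
  rw [← neg_sub, h, ← u_add_pi]
  push_cast
  ring_nf

theorem reuleauxVertex_zero : reuleauxVertex 0 = !₂[1/2, 1/(2*Real.sqrt 3)] := by
  ext i; fin_cases i <;> simp [reuleauxVertex, u]; field_simp

theorem reuleauxVertex_one : reuleauxVertex 1 = !₂[-(1/2), 1/(2*Real.sqrt 3)] := by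
  have h : 2 * ((1 : ℤ) : ℝ) * π / 3 + π / 6 = π - π / 6 := by push_cast; ring
  ext i; fin_cases i <;> simp only [reuleauxVertex, h] <;> simp [u]; field_simp

theorem reuleauxVertex_neg_one : reuleauxVertex (-1) = !₂[0, -(1/Real.sqrt 3)] := by
  have h : 2 * ((-1 : ℤ) : ℝ) * π / 3 + π / 6 = -(π / 2) := by push_cast; ring
  ext i; fin_cases i <;> simp only [reuleauxVertex, h] <;> simp [u]

theorem mem_reuleauxTriangle_iff {x : ℝ²} :
    x ∈ ReuleauxTriangle ↔ ∀ k : ℤ, dist x (reuleauxVertex k) ≤ 1 := by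
  rw [ReuleauxTriangle, ← reuleauxVertex_zero, ← reuleauxVertex_one, ← reuleauxVertex_neg_one]
  simp only [mem_inter_iff, mem_closedBall]
  refine ⟨fun ⟨⟨h₀, h₁⟩, h₂⟩ k ↦ ?_, fun h ↦ ⟨⟨h 0, h 1⟩, h (-1)⟩⟩
  rcases reuleauxVertex_eq_pred_or_self_or_succ 0 k with hk | hk | hk <;> rw [hk]
  exacts [h₂, h₀, h₁]

theorem reuleauxVertex_mem (m : ℤ) : reuleauxVertex m ∈ ReuleauxTriangle := by
  refine mem_reuleauxTriangle_iff.2 fun k ↦ ?_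
  rcases reuleauxVertex_eq_pred_or_self_or_succ m k with hk | hk | hk <;>
    simp only [hk, dist_eq_norm, reuleauxVertex_sub_pred, reuleauxVertex_sub_succ, norm_u,
      sub_self, norm_zero, zero_le_one, le_refl]

theorem inner_sub_reuleauxVertex_nonpos {x : ℝ²} (hx : x ∈ ReuleauxTriangle) {m k : ℤ}
    (hmk : ‖reuleauxVertex m - reuleauxVertex k‖ = 1) :
    ⟪x - reuleauxVertex m, reuleauxVertex m - reuleauxVertex k⟫ ≤ 0 :=
  inner_sub_nonpos_of_norm_sub_le <| by
    rw [hmk, ← dist_eq_norm]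
    exact mem_reuleauxTriangle_iff.1 hx k

theorem inner_le_inner_reuleauxVertex {x : ℝ²} (hx : x ∈ ReuleauxTriangle) {m : ℤ} {θ : ℝ}
    (hθ : θ - 2 * m * π / 3 ∈ Icc 0 (π / 3)) : ⟪x, u θ⟫ ≤ ⟪reuleauxVertex m, u θ⟫ := by
  have h₀ := inner_sub_reuleauxVertex_nonpos hx (k := m + 1)
    (by rw [reuleauxVertex_sub_succ, norm_u])
  have h₁ := inner_sub_reuleauxVertex_nonpos hx (k := m - 1)
    (by rw [reuleauxVertex_sub_pred, norm_u])
  rw [reuleauxVertex_sub_succ] at h₀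
  rw [reuleauxVertex_sub_pred] at h₁
  have h := inner_u_add_nonpos ⟨by positivity, by linarith [pi_pos]⟩ hθ h₀ h₁
  rw [add_sub_cancel, inner_sub_left] at h
  linarith

theorem reuleauxVertex_sub_u_mem {m : ℤ} {θ : ℝ} (hθ : θ - 2 * m * π / 3 ∈ Icc 0 (π / 3)) :
    reuleauxVertex m - u θ ∈ ReuleauxTriangle := by
  refine mem_reuleauxTriangle_iff.2 fun k ↦ ?_
  rcases reuleauxVertex_eq_pred_or_self_or_succ m k with hk | hk | hk <;> rw [hk]
  · refine sub_mem_closedBall_of_half_le_inner (by rw [reuleauxVertex_sub_pred, norm_u])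
      (norm_u θ) ?_
    rw [reuleauxVertex_sub_pred, inner_u_u]
    exact half_le_cos_of_abs_le (abs_le.2 ⟨by linarith [hθ.1], by linarith [hθ.2, pi_pos]⟩)
  · simp [norm_u]
  · refine sub_mem_closedBall_of_half_le_inner (by rw [reuleauxVertex_sub_succ, norm_u])
      (norm_u θ) ?_
    rw [reuleauxVertex_sub_succ, inner_u_u]
    exact half_le_cos_of_abs_le (abs_le.2 ⟨by linarith [hθ.1, pi_pos], hθ.2⟩)

theorem isGreatest_inner_reuleauxTriangle {m : ℤ} {θ : ℝ}
    (hθ : θ - 2 * m * π / 3 ∈ Icc 0 (π / 3)) :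
    IsGreatest ((fun x ↦ ⟪x, u θ⟫) '' ReuleauxTriangle) ⟪reuleauxVertex m, u θ⟫ ∧
      IsGreatest ((fun x ↦ ⟪x, u (θ + π)⟫) '' ReuleauxTriangle)
        (1 - ⟪reuleauxVertex m, u θ⟫) := by
  simp only [u_add_pi]
  exact isGreatest_inner_of_vertex (norm_u θ) (reuleauxVertex_mem m) (reuleauxVertex_sub_u_mem hθ)
    (fun x hx ↦ mem_reuleauxTriangle_iff.1 hx m) fun x hx ↦ inner_le_inner_reuleauxVertex hx hθ

theorem exists_int_sub_mem_Icc (θ : ℝ) :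
    ∃ m : ℤ, θ - 2 * m * π / 3 ∈ Icc 0 (π / 3) ∨ θ + π - 2 * m * π / 3 ∈ Icc 0 (π / 3) := by
  set n := ⌊θ / (2 * π / 3)⌋
  have hp : 0 < 2 * π / 3 := by positivity
  have h₀ : n * (2 * π / 3) ≤ θ := (le_div_iff₀ hp).1 (Int.floor_le _)
  have h₁ : θ < (n + 1) * (2 * π / 3) := (div_lt_iff₀ hp).1 (Int.lt_floor_add_one _)
  rcases le_or_gt (θ - 2 * n * π / 3) (π / 3) with h | h
  · exact ⟨n, Or.inl ⟨by linarith, h⟩⟩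
  · refine ⟨n + 2, Or.inr ⟨?_, ?_⟩⟩ <;> push_cast <;> linarith

theorem exists_isSupportFn_add_pi_eq_one {K : Set ℝ²}
    (hK : ∀ θ, ∃ M, IsGreatest ((fun x ↦ ⟪x, u θ⟫) '' K) M ∧
      IsGreatest ((fun x ↦ ⟪x, u (θ + π)⟫) '' K) (1 - M)) :
    ∃ h : ℝ → ℝ, IsSupportFn K h ∧ ∀ θ, h θ + h (θ + π) = 1 := by
  choose h hh using hK
  refine ⟨h, fun θ ↦ (hh θ).1, fun θ ↦ ?_⟩
  rw [(hh (θ + π)).1.unique (hh θ).2]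
  ring

theorem exists_isSupportFn_reuleauxTriangle_add_pi_eq_one :
    ∃ h : ℝ → ℝ, IsSupportFn ReuleauxTriangle h ∧ ∀ θ, h θ + h (θ + π) = 1 := by
  refine exists_isSupportFn_add_pi_eq_one fun θ ↦ ?_
  obtain ⟨m, hm | hm⟩ := exists_int_sub_mem_Icc θ
  · exact ⟨_, isGreatest_inner_reuleauxTriangle hm⟩
  · obtain ⟨h₁, h₂⟩ := isGreatest_inner_reuleauxTriangle hm
    simp only [u_add_pi, neg_neg] at h₁ h₂ ⊢
    exact ⟨_, h₂, by simpa using h₁⟩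

theorem measure_prod_regionBetween_Icc {α : Type*} [MeasurableSpace α] {μ : Measure α}
    {f g : α → ℝ} {s : Set α} (hf : Measurable f) (hg : Measurable g) (hs : MeasurableSet s) :
    μ.prod volume {p : α × ℝ | p.1 ∈ s ∧ p.2 ∈ Icc (f p.1) (g p.1)} =
      μ.prod volume (regionBetween f g s) := by
  rw [Measure.prod_apply (measurableSet_region_between_cc hf hg hs),
    Measure.prod_apply (measurableSet_regionBetween hf hg hs)]
  refine lintegral_congr fun x ↦ ?_
  by_cases hx : x ∈ s
  · simp only [regionBetween, preimage, mem_ofPred_eq, hx, true_and, ofPred_mem_eq,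
      Real.volume_Icc, Real.volume_Ioo]
  · simp [hx, regionBetween]

theorem EuclideanSpace.mem_closedBall_iff_sq {x c : ℝ²} {r : ℝ} (hr : 0 ≤ r) :
    x ∈ closedBall c r ↔ (x 0 - c 0) ^ 2 + (x 1 - c 1) ^ 2 ≤ r ^ 2 := by
  rw [mem_closedBall, EuclideanSpace.dist_eq, Fin.sum_univ_two, sqrt_le_left hr]
  simp [Real.dist_eq, sq_abs]

theorem sqrt_one_sub_sq_le {x : ℝ} (hx : -(1 / 2) ≤ x) (hx' : x ≤ 3 / 2) :
    √(1 - x ^ 2) ≤ √3 / 2 + √(1 - (x - 1 / 2) ^ 2) := by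
  have h3 : √3 ^ 2 = 3 := sq_sqrt (by norm_num)
  have hr : √(1 - (x - 1 / 2) ^ 2) ^ 2 = 1 - (x - 1 / 2) ^ 2 := sq_sqrt (by nlinarith)
  rw [sqrt_le_left (by positivity)]
  nlinarith [mul_nonneg (sqrt_nonneg 3) (sqrt_nonneg (1 - (x - 1 / 2) ^ 2))]

theorem sqrt_three_div_two_le_sqrt {x : ℝ} (hx : |x| ≤ 1 / 2) : √3 / 2 ≤ √(1 - x ^ 2) := by
  rw [le_sqrt (by positivity) (by nlinarith [sq_abs x, abs_nonneg x]), div_pow,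
    sq_sqrt (by norm_num)]
  nlinarith [sq_abs x, abs_nonneg x]

noncomputable def reuleauxLower (x : ℝ) : ℝ := √3 / 6 - √(1 - (|x| + 1 / 2) ^ 2)

noncomputable def reuleauxUpper (x : ℝ) : ℝ := √(1 - x ^ 2) - √3 / 3

theorem reuleauxLower_le_reuleauxUpper {x : ℝ} (hx : |x| ≤ 1 / 2) :
    reuleauxLower x ≤ reuleauxUpper x := by
  have := sqrt_three_div_two_le_sqrt hx
  have := sqrt_nonneg (1 - (|x| + 1 / 2) ^ 2)
  rw [reuleauxLower, reuleauxUpper]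
  linarith

theorem sub_half_sq_add_sq_le_one_of_mem_Icc {x y : ℝ} (hx : |x| ≤ 1 / 2)
    (hy : y ∈ Icc (reuleauxLower x) (reuleauxUpper x)) :
    (x - 1 / 2) ^ 2 + (y - √3 / 6) ^ 2 ≤ 1 := by
  obtain ⟨hlo, hup⟩ := hy
  rw [reuleauxLower] at hlo
  rw [reuleauxUpper] at hup
  have hx' := abs_le.1 hx
  have h_arc := sqrt_one_sub_sq_le (x := x) (by linarith) (by linarith)
  have h_mono : √(1 - (|x| + 1 / 2) ^ 2) ≤ √(1 - (x - 1 / 2) ^ 2) :=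
    sqrt_le_sqrt (by nlinarith [neg_abs_le x, abs_nonneg x])
  have h_sq : (y - √3 / 6) ^ 2 ≤ √(1 - (x - 1 / 2) ^ 2) ^ 2 :=
    sq_le_sq' (by linarith) (by linarith)
  rw [sq_sqrt (by nlinarith)] at h_sq
  linarith

theorem abs_le_half_and_mem_Icc_of_sq_add_sq_le_one {x y : ℝ}
    (h₁ : (x - 1 / 2) ^ 2 + (y - √3 / 6) ^ 2 ≤ 1) (h₂ : (x + 1 / 2) ^ 2 + (y - √3 / 6) ^ 2 ≤ 1)
    (h₃ : x ^ 2 + (y + √3 / 3) ^ 2 ≤ 1) :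
    |x| ≤ 1 / 2 ∧ y ∈ Icc (reuleauxLower x) (reuleauxUpper x) := by
  have hx : |x| ≤ 1 / 2 := abs_le.2 ⟨by nlinarith, by nlinarith⟩
  refine ⟨hx, ?_, ?_⟩
  · have h : (y - √3 / 6) ^ 2 ≤ 1 - (|x| + 1 / 2) ^ 2 := by
      rcases abs_cases x with ⟨hx, -⟩ | ⟨hx, -⟩ <;> rw [hx] <;> linarith
    have := abs_le_sqrt h
    rw [reuleauxLower]
    linarith [neg_abs_le (y - √3 / 6)]
  · have := abs_le_sqrt (show (y + √3 / 3) ^ 2 ≤ 1 - x ^ 2 by linarith)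
    rw [reuleauxUpper]
    linarith [le_abs_self (y + √3 / 3)]

theorem sq_add_sq_le_one_of_mem_Icc {x y : ℝ} (hx : |x| ≤ 1 / 2)
    (hy : y ∈ Icc (reuleauxLower x) (reuleauxUpper x)) : x ^ 2 + (y + √3 / 3) ^ 2 ≤ 1 := by
  obtain ⟨hlo, hup⟩ := hy
  rw [reuleauxLower] at hlo
  rw [reuleauxUpper] at hup
  have h_far := sqrt_three_div_two_le_sqrt hx
  have h_le_one : √(1 - (|x| + 1 / 2) ^ 2) ≤ 1 := sqrt_le_one.2 (by nlinarith [abs_nonneg x])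
  have h_one_le : 1 ≤ √3 := one_le_sqrt.2 (by norm_num)
  have h_sq : (y + √3 / 3) ^ 2 ≤ √(1 - x ^ 2) ^ 2 := sq_le_sq' (by linarith) (by linarith)
  rw [sq_sqrt (by nlinarith [sq_abs x, abs_nonneg x])] at h_sq
  linarith

theorem reuleauxLower_neg (x : ℝ) : reuleauxLower (-x) = reuleauxLower x := by
  rw [reuleauxLower, reuleauxLower, abs_neg]

theorem reuleauxUpper_neg (x : ℝ) : reuleauxUpper (-x) = reuleauxUpper x := by
  rw [reuleauxUpper, reuleauxUpper, neg_sq]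

theorem mem_reuleauxTriangle_iff_mem_Icc {x : ℝ²} :
    x ∈ ReuleauxTriangle ↔
      |x 0| ≤ 1 / 2 ∧ x 1 ∈ Icc (reuleauxLower (x 0)) (reuleauxUpper (x 0)) := by
  have h₆ : 1 / (2 * √3) = √3 / 6 := by field_simp; rw [sq_sqrt (by norm_num)]; norm_num
  have h₃ : 1 / √3 = √3 / 3 := by field_simp; rw [sq_sqrt (by norm_num)]
  simp only [ReuleauxTriangle, mem_inter_iff, EuclideanSpace.mem_closedBall_iff_sq zero_le_one,
    Matrix.cons_val_zero, Matrix.cons_val_one, sub_neg_eq_add, sub_zero, one_pow, h₆, h₃]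
  constructor
  · rintro ⟨⟨h₁, h₂⟩, h₃⟩
    exact abs_le_half_and_mem_Icc_of_sq_add_sq_le_one h₁ h₂ h₃
  · rintro ⟨hx, hy⟩
    have h₂ := sub_half_sq_add_sq_le_one_of_mem_Icc (x := -x 0) (by rwa [abs_neg])
      (by rwa [reuleauxLower_neg, reuleauxUpper_neg])
    rw [← neg_add', neg_sq] at h₂
    exact ⟨⟨sub_half_sq_add_sq_le_one_of_mem_Icc hx hy, h₂⟩, sq_add_sq_le_one_of_mem_Icc hx hy⟩

theorem continuous_reuleauxLower : Continuous reuleauxLower := by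
  unfold reuleauxLower; fun_prop

theorem continuous_reuleauxUpper : Continuous reuleauxUpper := by
  unfold reuleauxUpper; fun_prop

theorem volume_reuleauxTriangle_eq_integral :
    volume ReuleauxTriangle =
      ENNReal.ofReal (∫ x in (-(1 / 2))..(1 / 2), (reuleauxUpper x - reuleauxLower x)) := by
  have h_pres : MeasurePreserving (fun x : ℝ² ↦ (x 0, x 1)) :=
    (volume_preserving_finTwoArrow ℝ).comp (PiLp.volume_preserving_ofLp (Fin 2))
  have h_eq : ReuleauxTriangle = (fun x : ℝ² ↦ (x 0, x 1)) ⁻¹'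
      {p : ℝ × ℝ | p.1 ∈ Icc (-(1 / 2)) (1 / 2) ∧
        p.2 ∈ Icc (reuleauxLower p.1) (reuleauxUpper p.1)} := by
    ext x
    simp only [mem_reuleauxTriangle_iff_mem_Icc, abs_le, mem_preimage, mem_ofPred_eq, mem_Icc]
  have h_meas := measurableSet_region_between_cc continuous_reuleauxLower.measurable
    continuous_reuleauxUpper.measurable (measurableSet_Icc (a := -(1 / 2 : ℝ)) (b := 1 / 2))
  rw [h_eq, h_pres.measure_preimage h_meas.nullMeasurableSet, Measure.volume_eq_prod,
    measure_prod_regionBetween_Icc continuous_reuleauxLower.measurable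
      continuous_reuleauxUpper.measurable measurableSet_Icc,
    volume_regionBetween_eq_integral continuous_reuleauxLower.integrableOn_Icc
      continuous_reuleauxUpper.integrableOn_Icc measurableSet_Icc
      fun x hx ↦ reuleauxLower_le_reuleauxUpper (abs_le.2 hx),
    integral_Icc_eq_integral_Ioc, ← intervalIntegral.integral_of_le (by norm_num)]
  rfl

theorem integral_sqrt_one_sub_sq_abs_add_half :
    ∫ x in (-(1 / 2))..(1 / 2), √(1 - (|x| + 1 / 2) ^ 2) =
      (∫ x in (-1)..(-(1 / 2)), √(1 - x ^ 2)) + ∫ x in (1 / 2)..1, √(1 - x ^ 2) := by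
  have h_int : Continuous fun x : ℝ ↦ √(1 - (|x| + 1 / 2) ^ 2) := by fun_prop
  rw [← intervalIntegral.integral_add_adjacent_intervals (b := 0)
    (h_int.intervalIntegrable _ _) (h_int.intervalIntegrable _ _)]
  congr 1
  · have h := intervalIntegral.integral_comp_sub_right (a := -(1 / 2)) (b := 0)
      (fun x : ℝ ↦ √(1 - x ^ 2)) (1 / 2)
    norm_num at h
    rw [← h]
    refine intervalIntegral.integral_congr fun x hx ↦ ?_
    rw [uIcc_of_le (by norm_num)] at hx
    simp only [abs_of_nonpos hx.2]
    ring_nf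
  · have h := intervalIntegral.integral_comp_add_right (a := 0) (b := 1 / 2)
      (fun x : ℝ ↦ √(1 - x ^ 2)) (1 / 2)
    norm_num at h
    rw [← h]
    refine intervalIntegral.integral_congr fun x hx ↦ ?_
    rw [uIcc_of_le (by norm_num)] at hx
    simp only [abs_of_nonneg hx.1]

theorem integral_reuleauxUpper_sub_reuleauxLower :
    ∫ x in (-(1 / 2))..(1 / 2), (reuleauxUpper x - reuleauxLower x) = (π - √3) / 2 := by
  have h_sq : Continuous fun x : ℝ ↦ √(1 - x ^ 2) := by fun_prop
  have h_abs : Continuous fun x : ℝ ↦ √(1 - (|x| + 1 / 2) ^ 2) := by fun_prop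
  have h_eq : (fun x ↦ reuleauxUpper x - reuleauxLower x) =
      fun x ↦ (√(1 - x ^ 2) + √(1 - (|x| + 1 / 2) ^ 2)) - √3 / 2 := by
    funext x
    rw [reuleauxUpper, reuleauxLower]
    ring
  have h_total : (∫ x in (-1)..(-(1 / 2)), √(1 - x ^ 2)) +
      (∫ x in (-(1 / 2))..(1 / 2), √(1 - x ^ 2)) + ∫ x in (1 / 2)..1, √(1 - x ^ 2) = π / 2 := by
    rw [intervalIntegral.integral_add_adjacent_intervals (h_sq.intervalIntegrable _ _)
      (h_sq.intervalIntegrable _ _), intervalIntegral.integral_add_adjacent_intervals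
      (h_sq.intervalIntegrable _ _) (h_sq.intervalIntegrable _ _), integral_sqrt_one_sub_sq]
  have h_sum : Continuous fun x : ℝ ↦ √(1 - x ^ 2) + √(1 - (|x| + 1 / 2) ^ 2) := by fun_prop
  rw [h_eq, intervalIntegral.integral_sub (h_sum.intervalIntegrable _ _)
    intervalIntegrable_const, intervalIntegral.integral_add (h_sq.intervalIntegrable _ _)
    (h_abs.intervalIntegrable _ _), integral_sqrt_one_sub_sq_abs_add_half,
    intervalIntegral.integral_const, smul_eq_mul]
  linarith

/-- The Reuleaux triangle is a convex body of constant width 1 whose area is `(π − √3)/2`. -/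
theorem reuleauxTriangle_constant_width_and_area :
    ReuleauxTriangle.Nonempty ∧ IsCompact ReuleauxTriangle ∧ Convex ℝ ReuleauxTriangle ∧
    (∃ h : ℝ → ℝ, IsSupportFn ReuleauxTriangle h ∧ ∀ θ : ℝ, h θ + h (θ + π) = 1) ∧
    volume ReuleauxTriangle = ENNReal.ofReal ((π - Real.sqrt 3) / 2) := by
  refine ⟨⟨_, reuleauxVertex_mem 0⟩, ?_, ?_, exists_isSupportFn_reuleauxTriangle_add_pi_eq_one, ?_⟩
  · exact ((isCompact_closedBall _ _).inter_right isClosed_closedBall).inter_right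
      isClosed_closedBall
  · exact ((convex_closedBall _ _).inter (convex_closedBall _ _)).inter (convex_closedBall _ _)
  · rw [volume_reuleauxTriangle_eq_integral, integral_reuleauxUpper_sub_reuleauxLower]
end

section
/- Let h : ℝ → ℝ be continuous and 2π-periodic, and suppose that for every θ ∈ ℝ and every φ ∈ [−π/2, π/2] one has h(θ+φ) + h(θ−φ) ≥ 2 h(θ) cos(φ). Then for every smooth compactly supported function f : ℝ → [0, ∞), ∫_ℝ h(θ)(f''(θ) + f(θ)) dθ ≥ 0. -/
open Real MeasureTheory Filter Set Topology

/-- Symmetric second difference equals second derivative at an intermediate point. -/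
lemma symm_sq (g g' g'' : ℝ → ℝ)
    (hg1 : ∀ x, HasDerivAt g (g' x) x)
    (hg2 : ∀ x, HasDerivAt g' (g'' x) x)
    (θ φ : ℝ) (hφ : 0 < φ) :
    ∃ ξ ∈ Set.Ioo (θ - φ) (θ + φ),
      g (θ + φ) + g (θ - φ) - 2 * g θ = g'' ξ * φ ^ 2 := by
  set H : ℝ → ℝ := fun t => g (θ + t) + g (θ - t) with hHdef
  set H' : ℝ → ℝ := fun t => g' (θ + t) - g' (θ - t) with hH'def
  have hHd : ∀ t, HasDerivAt H (H' t) t := by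
    intro t
    have h1 : HasDerivAt (fun t => g (θ + t)) (g' (θ + t)) t := by
      simpa [Function.comp_def] using (hg1 (θ + t)).comp t (((hasDerivAt_id t).const_add θ))
    have h2 : HasDerivAt (fun t => g (θ - t)) (-g' (θ - t)) t := by
      simpa [Function.comp_def] using (hg1 (θ - t)).comp t (((hasDerivAt_id t).neg.const_add θ))
    simpa [H, H', sub_eq_add_neg, Pi.add_def] using h1.add h2
  have hHc : ContinuousOn H (Set.Icc 0 φ) :=
    (continuous_iff_continuousAt.2 fun t => (hHd t).continuousAt).continuousOn
  have hsq : ∀ x : ℝ, HasDerivAt (fun t : ℝ => t ^ 2) (2 * x) x := by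
    intro x; simpa using hasDerivAt_pow 2 x
  obtain ⟨c, hc, hcc⟩ :=
    exists_ratio_hasDerivAt_eq_ratio_slope H H' hφ hHc (fun x _ => hHd x)
      (fun t : ℝ => t ^ 2) (fun t => 2 * t)
      (continuous_pow 2).continuousOn (fun x _ => hsq x)
  have hcpos : 0 < c := hc.1
  obtain ⟨ξ, hξ, hξeq⟩ :=
    exists_hasDerivAt_eq_slope g' g'' (by linarith : θ - c < θ + c)
      (continuous_iff_continuousAt.2 fun x => (hg2 x).continuousAt).continuousOn
      (fun x _ => hg2 x)
  refine ⟨ξ, ⟨by linarith [hξ.1, hc.2], by linarith [hξ.2, hc.2]⟩, ?_⟩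
  have hH'c : H' c = g'' ξ * (2 * c) := by
    have : θ + c - (θ - c) = 2 * c := by ring
    rw [this] at hξeq
    field_simp at hξeq
    simp only [H']; linarith [hξeq]
  have hH0 : H 0 = 2 * g θ := by simp [H]; ring
  have hHφ : H φ = g (θ + φ) + g (θ - φ) := rfl
  rw [hH'c, hHφ, hH0] at hcc
  have h2c : (2 * c) ≠ 0 := by positivity
  exact mul_right_cancel₀ h2c (by linear_combination -hcc)

/-- If `h` is continuous, `2π`-periodic, and satisfies Kallay's inequality
`h(θ+φ) + h(θ−φ) ≥ 2 h(θ) cos φ` for all `θ` and `φ ∈ [−π/2, π/2]`, then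
`∫ h (f'' + f) ≥ 0` for every smooth compactly supported `f ≥ 0`. -/
theorem kallay_implies_weak_ode (h : ℝ → ℝ)
    (hcont : Continuous h) (hper : Function.Periodic h (2 * π))
    (hkallay : ∀ θ : ℝ, ∀ φ ∈ Set.Icc (-(π/2)) (π/2),
      2 * h θ * Real.cos φ ≤ h (θ + φ) + h (θ - φ)) :
    ∀ f : ℝ → ℝ, ContDiff ℝ (⊤ : ℕ∞) f → HasCompactSupport f → (∀ x : ℝ, 0 ≤ f x) →
      0 ≤ ∫ θ : ℝ, h θ * (deriv (deriv f) θ + f θ) := by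
  intro f hf hsupp hf0
  have hfc : Continuous f := hf.continuous
  have hfi : ContDiff ℝ ((⊤ : ℕ∞) : WithTop ℕ∞) f := hf.of_le (by simp)
  have hdf : ContDiff ℝ ((⊤ : ℕ∞) : WithTop ℕ∞) (deriv f) :=
    (contDiff_infty_iff_deriv.mp hfi).2
  have hddfC : Continuous (deriv (deriv f)) :=
    ((contDiff_infty_iff_deriv.mp hdf).2).continuous
  have hf1 : ∀ x, HasDerivAt f (deriv f x) x := fun x =>
    ((contDiff_infty_iff_deriv.mp hfi).1 x).hasDerivAt
  have hf2 : ∀ x, HasDerivAt (deriv f) (deriv (deriv f) x) x := fun x =>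
    ((contDiff_infty_iff_deriv.mp hdf).1 x).hasDerivAt
  have hs1 : HasCompactSupport (deriv f) := hsupp.deriv
  have hs2 : HasCompactSupport (deriv (deriv f)) := hs1.deriv
  -- bounds
  obtain ⟨M, hM⟩ : ∃ M, ∀ x, |h x| ≤ M := by
    obtain ⟨C, hC⟩ := (isCompact_Icc (a := (0:ℝ)) (b := 2 * π)).exists_bound_of_continuousOn
      hcont.continuousOn
    refine ⟨C, fun x => ?_⟩
    obtain ⟨y, hy, hxy⟩ := hper.exists_mem_Ico₀ Real.two_pi_pos x
    rw [hxy]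
    simpa using hC y ⟨hy.1, hy.2.le⟩
  obtain ⟨S₂, hS₂⟩ : ∃ S, ∀ x, |deriv (deriv f) x| ≤ S := by
    simpa using hddfC.bounded_above_of_compact_support hs2
  obtain ⟨S₀, hS₀⟩ : ∃ S, ∀ x, |f x| ≤ S := by
    simpa using hfc.bounded_above_of_compact_support hsupp
  obtain ⟨R, hR0, hR⟩ : ∃ R : ℝ, 0 ≤ R ∧ ∀ x : ℝ, R < |x| → f x = 0 := by
    obtain ⟨r, hr⟩ := hsupp.isBounded.subset_closedBall 0
    refine ⟨max r 0, le_max_right _ _, fun x hx => ?_⟩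
    apply image_eq_zero_of_notMem_tsupport
    intro hmem
    have := hr hmem
    simp [Metric.mem_closedBall, Real.dist_eq] at this
    have := le_max_left r 0
    linarith [le_max_left r 0]
  -- the sequence of step sizes
  set φs : ℕ → ℝ := fun n => ((n : ℝ) + 1)⁻¹ with hφsdef
  have hφpos : ∀ n, 0 < φs n := fun n => by positivity
  have hφle : ∀ n, φs n ≤ 1 := by
    intro n
    have h1 : (1:ℝ) ≤ (n:ℝ) + 1 := by linarith [Nat.cast_nonneg (α := ℝ) n]
    calc φs n = ((n:ℝ) + 1)⁻¹ := rfl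
      _ ≤ 1⁻¹ := by
          apply inv_anti₀ one_pos h1
      _ = 1 := by norm_num
  have hφ0 : Tendsto φs atTop (𝓝 0) := by
    have := (tendsto_one_div_add_atTop_nhds_zero_nat : Tendsto (fun n : ℕ => 1 / ((n : ℝ) + 1)) atTop (𝓝 0))
    simpa [hφsdef, one_div] using this
  -- second-derivative facts for cosine
  have hcos1 : ∀ x : ℝ, HasDerivAt Real.cos (-Real.sin x) x := Real.hasDerivAt_cos
  have hcos2 : ∀ x : ℝ, HasDerivAt (fun x => -Real.sin x) (-Real.cos x) x := fun x =>
    (Real.hasDerivAt_sin x).neg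
  have hcosξ : ∀ n, ∃ ξ ∈ Set.Ioo (-(φs n)) (φs n),
      2 - 2 * Real.cos (φs n) = Real.cos ξ * (φs n) ^ 2 := by
    intro n
    obtain ⟨ξ, hξ, hq⟩ := symm_sq Real.cos (fun x => -Real.sin x) (fun x => -Real.cos x)
      hcos1 hcos2 0 (φs n) (hφpos n)
    refine ⟨ξ, by simpa using hξ, ?_⟩
    simp only [zero_add, zero_sub, Real.cos_neg, Real.cos_zero] at hq
    linarith [hq]
  have hfξ : ∀ θ : ℝ, ∀ n, ∃ ξ ∈ Set.Ioo (θ - φs n) (θ + φs n),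
      f (θ + φs n) + f (θ - φs n) - 2 * f θ = deriv (deriv f) ξ * (φs n) ^ 2 :=
    fun θ n => symm_sq f (deriv f) (deriv (deriv f)) hf1 hf2 θ (φs n) (hφpos n)
  -- the approximating integrands
  set F : ℕ → ℝ → ℝ := fun n θ =>
    h θ * (f (θ - φs n) + f (θ + φs n) - 2 * Real.cos (φs n) * f θ) / (φs n) ^ 2
    with hFdef
  -- generic integrability
  have hint : ∀ g : ℝ → ℝ, Continuous g → HasCompactSupport g →
      Integrable (fun θ : ℝ => h θ * g θ) := by
    intro g hg hsg
    exact (hcont.mul hg).integrable_of_hasCompactSupport (hsg.mul_left)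
  have htrans : ∀ c : ℝ, HasCompactSupport (fun θ : ℝ => f (θ - c)) := by
    intro c
    exact hsupp.comp_homeomorph (Homeomorph.subRight c)
  have htrans' : ∀ c : ℝ, HasCompactSupport (fun θ : ℝ => f (θ + c)) := by
    intro c
    exact hsupp.comp_homeomorph (Homeomorph.addRight c)
  -- Step A: each approximate integral is nonnegative
  have stepA : ∀ n, 0 ≤ ∫ θ : ℝ, F n θ := by
    intro n
    set φ := φs n with hφdef
    have hφp : 0 < φ := hφpos n
    have hφπ : φ ≤ π / 2 := le_trans (hφle n) (by linarith [Real.pi_gt_three])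
    have i1 : Integrable (fun θ : ℝ => h (θ + φ) * f θ) := by
      refine ((hcont.comp (continuous_add_right φ)).mul hfc).integrable_of_hasCompactSupport
        (hsupp.mul_left)
    have i2 : Integrable (fun θ : ℝ => h (θ - φ) * f θ) := by
      refine ((hcont.comp (continuous_sub_right φ)).mul hfc).integrable_of_hasCompactSupport
        (hsupp.mul_left)
    have i3 : Integrable (fun θ : ℝ => h θ * f θ) := hint f hfc hsupp
    have i1' : Integrable (fun θ : ℝ => h θ * f (θ - φ)) :=
      hint _ (hfc.comp (continuous_sub_right φ)) (htrans φ)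
    have i2' : Integrable (fun θ : ℝ => h θ * f (θ + φ)) :=
      hint _ (hfc.comp (continuous_add_right φ)) (htrans' φ)
    have e1 : (∫ θ : ℝ, h (θ + φ) * f θ) = ∫ θ : ℝ, h θ * f (θ - φ) := by
      have := MeasureTheory.integral_add_right_eq_self (μ := volume)
        (fun θ : ℝ => h θ * f (θ - φ)) φ
      rw [← this]
      simp
    have e2 : (∫ θ : ℝ, h (θ - φ) * f θ) = ∫ θ : ℝ, h θ * f (θ + φ) := by
      have := MeasureTheory.integral_sub_right_eq_self (μ := volume)
        (fun θ : ℝ => h θ * f (θ + φ)) φ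
      rw [← this]
      simp
    have key : 0 ≤ ∫ θ : ℝ, (h (θ + φ) + h (θ - φ) - 2 * h θ * Real.cos φ) * f θ :=
      integral_nonneg fun θ =>
        mul_nonneg (sub_nonneg.2 (hkallay θ φ ⟨by linarith, hφπ⟩)) (hf0 θ)
    have expand : (∫ θ : ℝ, (h (θ + φ) + h (θ - φ) - 2 * h θ * Real.cos φ) * f θ)
        = (∫ θ : ℝ, h θ * f (θ - φ)) + (∫ θ : ℝ, h θ * f (θ + φ))
          - 2 * Real.cos φ * ∫ θ : ℝ, h θ * f θ := by
      have hfun : (fun θ : ℝ => (h (θ + φ) + h (θ - φ) - 2 * h θ * Real.cos φ) * f θ)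
          = fun θ : ℝ => (h (θ + φ) * f θ + h (θ - φ) * f θ)
            - (2 * Real.cos φ) * (h θ * f θ) := by
        funext θ; ring
      have i12 : Integrable (fun θ : ℝ => h (θ + φ) * f θ + h (θ - φ) * f θ) := i1.add i2
      rw [hfun, integral_sub i12 (i3.const_mul _), integral_add i1 i2,
        integral_const_mul, e1, e2]
    have collect : (∫ θ : ℝ, h θ * (f (θ - φ) + f (θ + φ) - 2 * Real.cos φ * f θ))
        = (∫ θ : ℝ, h θ * f (θ - φ)) + (∫ θ : ℝ, h θ * f (θ + φ))
          - 2 * Real.cos φ * ∫ θ : ℝ, h θ * f θ := by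
      have hfun : (fun θ : ℝ => h θ * (f (θ - φ) + f (θ + φ) - 2 * Real.cos φ * f θ))
          = fun θ : ℝ => (h θ * f (θ - φ) + h θ * f (θ + φ))
            - (2 * Real.cos φ) * (h θ * f θ) := by
        funext θ; ring
      have i12 : Integrable (fun θ : ℝ => h θ * f (θ - φ) + h θ * f (θ + φ)) := i1'.add i2'
      rw [hfun, integral_sub i12 (i3.const_mul _), integral_add i1' i2',
        integral_const_mul]
    have hFint : (∫ θ : ℝ, F n θ)
        = (∫ θ : ℝ, h θ * (f (θ - φ) + f (θ + φ) - 2 * Real.cos φ * f θ)) / φ ^ 2 := by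
      simp only [hFdef, ← hφdef]
      exact integral_div _ _
    rw [hFint, collect, ← expand]
    positivity
  -- Step B: the approximate integrals converge to the target integral
  have stepB : Tendsto (fun n => ∫ θ : ℝ, F n θ) atTop
      (𝓝 (∫ θ : ℝ, h θ * (deriv (deriv f) θ + f θ))) := by
    set bound : ℝ → ℝ :=
      Set.indicator (Set.Icc (-(R + 1)) (R + 1)) (fun _ => M * (S₂ + 2 * S₀)) with hbdef
    have hM0 : 0 ≤ M := le_trans (abs_nonneg _) (hM 0)
    apply MeasureTheory.tendsto_integral_of_dominated_convergence bound
    · intro n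
      apply Continuous.aestronglyMeasurable
      exact (hcont.mul (((hfc.comp (continuous_sub_right _)).add
        (hfc.comp (continuous_add_right _))).sub
        (continuous_const.mul hfc))).div_const _
    · exact (MeasureTheory.integrableOn_const measure_Icc_lt_top.ne
        enorm_ne_top).integrable_indicator measurableSet_Icc
    · intro n
      filter_upwards with θ
      by_cases hθ : θ ∈ Set.Icc (-(R + 1)) (R + 1)
      · rw [hbdef, Set.indicator_of_mem hθ]
        obtain ⟨ξ, hξmem, hξ⟩ := hfξ θ n
        obtain ⟨η, hηmem, hη⟩ := hcosξ n
        have hG : f (θ - φs n) + f (θ + φs n) - 2 * Real.cos (φs n) * f θ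
            = (deriv (deriv f) ξ + Real.cos η * f θ) * (φs n) ^ 2 := by
          have : f (θ - φs n) + f (θ + φs n) - 2 * Real.cos (φs n) * f θ
              = (f (θ + φs n) + f (θ - φs n) - 2 * f θ)
                + (2 - 2 * Real.cos (φs n)) * f θ := by ring
          rw [this, hξ, hη]; ring
        have habs : |deriv (deriv f) ξ + Real.cos η * f θ| ≤ S₂ + 2 * S₀ := by
          have h1 := hS₂ ξ
          have h2 : |Real.cos η * f θ| ≤ 2 * S₀ := by
            rw [abs_mul]
            have := Real.abs_cos_le_one η
            have := hS₀ θ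
            nlinarith [abs_nonneg (f θ)]
          calc |deriv (deriv f) ξ + Real.cos η * f θ|
              ≤ |deriv (deriv f) ξ| + |Real.cos η * f θ| := abs_add_le _ _
            _ ≤ S₂ + 2 * S₀ := by linarith
        have hFval : F n θ = h θ * (deriv (deriv f) ξ + Real.cos η * f θ) := by
          simp only [hFdef]
          rw [hG]
          have hφ2 : (φs n) ^ 2 ≠ 0 := by positivity
          rw [mul_div_assoc, mul_div_cancel_right₀ _ hφ2]
        rw [hFval, Real.norm_eq_abs, abs_mul]
        have hhθ := hM θ
        have h0 : (0:ℝ) ≤ |deriv (deriv f) ξ + Real.cos η * f θ| := abs_nonneg _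
        nlinarith [abs_nonneg (h θ)]
      · rw [hbdef, Set.indicator_of_notMem hθ]
        have hθ' : R + 1 < |θ| := by
          simp only [Set.mem_Icc, not_and_or, not_le] at hθ
          rcases hθ with h1 | h1
          · rw [abs_of_neg (by linarith : θ < 0)]; linarith
          · rw [abs_of_pos (by linarith : 0 < θ)]; linarith
        have habs : ∀ c : ℝ, |c| ≤ 1 → f (θ + c) = 0 := by
          intro c hc
          apply hR
          calc R < |θ| - 1 := by linarith
            _ ≤ |θ| - |c| := by linarith
            _ ≤ |θ + c| := by
                have := abs_add_le (θ + c) (-c)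
                simp at this
                linarith [abs_neg c]
        have hz1 : f (θ - φs n) = 0 := by
          have := habs (-(φs n)) (by rw [abs_neg, abs_of_pos (hφpos n)]; exact hφle n)
          simpa [sub_eq_add_neg] using this
        have hz2 : f (θ + φs n) = 0 :=
          habs (φs n) (by rw [abs_of_pos (hφpos n)]; exact hφle n)
        have hz3 : f θ = 0 := by
          have := habs 0 (by simp)
          simpa using this
        simp [hFdef, hz1, hz2, hz3]
    · filter_upwards with θ
      choose ξ hξmem hξeq using hfξ θ
      choose η hηmem hηeq using hcosξ
      have hFeq : ∀ n, F n θ = h θ * (deriv (deriv f) (ξ n) + Real.cos (η n) * f θ) := by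
        intro n
        have hG : f (θ - φs n) + f (θ + φs n) - 2 * Real.cos (φs n) * f θ
            = (deriv (deriv f) (ξ n) + Real.cos (η n) * f θ) * (φs n) ^ 2 := by
          have : f (θ - φs n) + f (θ + φs n) - 2 * Real.cos (φs n) * f θ
              = (f (θ + φs n) + f (θ - φs n) - 2 * f θ)
                + (2 - 2 * Real.cos (φs n)) * f θ := by ring
          rw [this, hξeq n, hηeq n]; ring
        simp only [hFdef]
        rw [hG]
        have hφ2 : (φs n) ^ 2 ≠ 0 := by positivity
        rw [mul_div_assoc, mul_div_cancel_right₀ _ hφ2]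
      have hξlim : Tendsto ξ atTop (𝓝 θ) := by
        apply tendsto_of_tendsto_of_tendsto_of_le_of_le
          (g := fun n => θ - φs n) (h := fun n => θ + φs n)
        · simpa using tendsto_const_nhds.sub hφ0
        · simpa using tendsto_const_nhds.add hφ0
        · exact fun n => (hξmem n).1.le
        · exact fun n => (hξmem n).2.le
      have hηlim : Tendsto η atTop (𝓝 0) := by
        apply tendsto_of_tendsto_of_tendsto_of_le_of_le
          (g := fun n => -(φs n)) (h := fun n => φs n)
        · simpa using hφ0.neg
        · exact hφ0
        · exact fun n => (hηmem n).1.le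
        · exact fun n => (hηmem n).2.le
      have : Tendsto (fun n => h θ * (deriv (deriv f) (ξ n) + Real.cos (η n) * f θ))
          atTop (𝓝 (h θ * (deriv (deriv f) θ + f θ))) := by
        have h1 : Tendsto (fun n => deriv (deriv f) (ξ n)) atTop
            (𝓝 (deriv (deriv f) θ)) := (hddfC.tendsto θ).comp hξlim
        have h2 : Tendsto (fun n => Real.cos (η n)) atTop (𝓝 1) := by
          have := (Real.continuous_cos.tendsto 0).comp hηlim
          simpa [Function.comp_def] using this
        have h3 : Tendsto (fun n => deriv (deriv f) (ξ n) + Real.cos (η n) * f θ)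
            atTop (𝓝 (deriv (deriv f) θ + 1 * f θ)) :=
          h1.add (h2.mul (tendsto_const_nhds : Tendsto (fun _ : ℕ => f θ) atTop (𝓝 (f θ))))
        simpa using h3.const_mul (h θ)
      exact Tendsto.congr (fun n => (hFeq n).symm) this
  exact ge_of_tendsto' stepB stepA
end

section
/- Let K ⊆ ℝ² be a convex body of constant width 1 with support function h, and let γ(θ) = h(θ) u(θ) + h'(θ) u'(θ). If (θ₀, θ₁) ⊆ [0, 2π] is an interval on which h''(θ) + h(θ) > 0 for almost every θ ∈ (θ₀, θ₁), then γ is injective on (θ₀, θ₁). -/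
open Real MeasureTheory

/-- The rotated vector `u' θ = (−sin θ, cos θ)`, the derivative of `u`. -/
noncomputable def u' (θ : ℝ) : EuclideanSpace ℝ (Fin 2) := !₂[-Real.sin θ, Real.cos θ]

/-!
Constant width makes `h` differentiable: at a contact point `x` in direction `θ`, `h` is squeezed
between `t ↦ ⟪x, u t⟫` from below and `t ↦ 1 + ⟪y, u t⟫` from above, where `y` is the contact
point in direction `θ + π`. Hence `γ θ` is the contact point in direction `θ`. If `γ a = γ b = x`,
then `x` is a contact point in both directions; width `1` excludes `b - a = π`, and on the arc
between them of length `< π` every `u θ` is a nonnegative combination of the two end directions,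
so `h = ⟪x, u ·⟫` there. Then `h'' + h = 0` on an interval, against `h'' + h > 0` a.e.
-/

open Filter Set Topology Asymptotics

theorem HasDerivAt.of_eventually_le_of_le {f g φ : ℝ → ℝ} {a c c' : ℝ}
    (hf : HasDerivAt f c a) (hg : HasDerivAt g c' a)
    (hfφ : f ≤ᶠ[𝓝 a] φ) (hφg : φ ≤ᶠ[𝓝 a] g) (hfa : f a = φ a) (hga : g a = φ a) :
    HasDerivAt φ c a := by
  have hmin : IsLocalMin (g - f) a := by
    filter_upwards [hfφ, hφg] with x h₁ h₂
    simp only [Pi.sub_apply, hfa, hga, sub_self]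
    linarith
  obtain rfl : c' = c := by
    have := hmin.hasDerivAt_eq_zero (hg.sub hf)
    linarith
  have hgf : HasDerivAt (g - f) 0 a := by simpa using hg.sub hf
  have hφf : HasDerivAt (φ - f) 0 a := by
    rw [hasDerivAt_iff_isLittleO] at hgf ⊢
    refine (IsBigO.of_bound 1 ?_).trans_isLittleO hgf
    filter_upwards [hfφ, hφg] with x h₁ h₂
    simp only [Pi.sub_apply, hfa, hga, sub_self, smul_zero, sub_zero, one_mul, norm_eq_abs]
    rw [abs_of_nonneg (by linarith), abs_of_nonneg (by linarith)]
    linarith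
  simpa using hf.add hφf

theorem exists_mem_Ioo_of_ae_imp {p : ℝ → Prop} {s : Set ℝ} {c d : ℝ}
    (hp : ∀ᵐ θ, θ ∈ s → p θ) (hcd : c < d) (hs : Ioo c d ⊆ s) : ∃ θ ∈ Ioo c d, p θ := by
  have hp' : ∀ᵐ θ ∂volume.restrict (Ioo c d), p θ :=
    (ae_restrict_iff' measurableSet_Ioo).2 (hp.mono fun θ hθ hθs => hθ (hs hθs))
  have : (ae (volume.restrict (Ioo c d))).NeBot := by
    rw [ae_neBot, Ne, Measure.restrict_eq_zero, Real.volume_Ioo, ENNReal.ofReal_eq_zero]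
    linarith
  exact ((ae_restrict_mem measurableSet_Ioo).and hp').exists

open scoped RealInnerProductSpace

section Directions

variable (x : EuclideanSpace ℝ (Fin 2)) (θ : ℝ)

theorem inner_u : ⟪x, u θ⟫ = x 0 * cos θ + x 1 * sin θ := by
  simp [u, PiLp.inner_apply, Fin.sum_univ_two, mul_comm]

theorem inner_u' : ⟪x, u' θ⟫ = -(x 0 * sin θ) + x 1 * cos θ := by
  simp [u', PiLp.inner_apply, Fin.sum_univ_two, mul_comm]

theorem inner_u_add_pi : ⟪x, u (θ + π)⟫ = -⟪x, u θ⟫ := by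
  simp only [inner_u, cos_add_pi, sin_add_pi]
  ring

theorem u_add_two_pi : u (θ + 2 * π) = u θ := by
  simp only [u, cos_add_two_pi, sin_add_two_pi]

theorem inner_u_smul_add_inner_u'_smul : ⟪x, u θ⟫ • u θ + ⟪x, u' θ⟫ • u' θ = x := by
  rw [inner_u, inner_u']
  ext i
  fin_cases i
  · simp [u, u']
    linear_combination x 0 * sin_sq_add_cos_sq θ
  · simp [u, u']
    linear_combination x 1 * sin_sq_add_cos_sq θ

theorem hasDerivAt_inner_u : HasDerivAt (fun t => ⟪x, u t⟫) ⟪x, u' θ⟫ θ := by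
  simp only [inner_u, inner_u']
  exact (((hasDerivAt_cos θ).const_mul (x 0)).add
    ((hasDerivAt_sin θ).const_mul (x 1))).congr_deriv (by ring)

theorem hasDerivAt_inner_u' : HasDerivAt (fun t => ⟪x, u' t⟫) (-⟪x, u θ⟫) θ := by
  simp only [inner_u, inner_u']
  exact (((hasDerivAt_sin θ).const_mul (x 0)).neg.add
    ((hasDerivAt_cos θ).const_mul (x 1))).congr_deriv (by ring)

theorem sin_sub_mul_inner_u (α β : ℝ) :
    sin (β - α) * ⟪x, u θ⟫ = sin (β - θ) * ⟪x, u α⟫ + sin (θ - α) * ⟪x, u β⟫ := by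
  simp only [inner_u, sin_sub]
  ring

end Directions

theorem deriv_deriv_add_eq_zero_of_eqOn {h : ℝ → ℝ} {x : EuclideanSpace ℝ (Fin 2)} {s : Set ℝ}
    (hs : IsOpen s) (heq : EqOn h (fun θ => ⟪x, u θ⟫) s) {θ : ℝ} (hθ : θ ∈ s) :
    deriv (deriv h) θ + h θ = 0 := by
  have hderiv : deriv h =ᶠ[𝓝 θ] fun t => ⟪x, u' t⟫ := by
    filter_upwards [hs.mem_nhds hθ] with t ht
    rw [(heq.eventuallyEq_of_mem (hs.mem_nhds ht)).deriv_eq, (hasDerivAt_inner_u x t).deriv]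
  rw [hderiv.deriv_eq, (hasDerivAt_inner_u' x θ).deriv, heq hθ, neg_add_cancel]

namespace IsSupportFn

variable {K : Set (EuclideanSpace ℝ (Fin 2))} {h : ℝ → ℝ} (hK : IsSupportFn K h)
include hK

theorem inner_le {x : EuclideanSpace ℝ (Fin 2)} (hx : x ∈ K) (θ : ℝ) : ⟪x, u θ⟫ ≤ h θ :=
  (hK θ).2 ⟨x, hx, rfl⟩

theorem exists_inner_eq (θ : ℝ) : ∃ x ∈ K, ⟪x, u θ⟫ = h θ :=
  (hK θ).1

theorem periodic : Function.Periodic h (2 * π) := fun θ =>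
  (hK (θ + 2 * π)).unique (by rw [u_add_two_pi]; exact hK θ)

theorem eqOn_inner_of_inner_eq {x : EuclideanSpace ℝ (Fin 2)} (hx : x ∈ K) {α β : ℝ}
    (hαβ : α < β) (hβα : β - α < π) (hα : ⟪x, u α⟫ = h α) (hβ : ⟪x, u β⟫ = h β) :
    EqOn h (fun θ => ⟪x, u θ⟫) (Icc α β) := by
  rintro θ ⟨hαθ, hθβ⟩
  obtain ⟨z, hz, hzθ⟩ := hK.exists_inner_eq θ
  have hsin : 0 < sin (β - α) := sin_pos_of_pos_of_lt_pi (by linarith) hβα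
  have hsin₁ : 0 ≤ sin (β - θ) := sin_nonneg_of_nonneg_of_le_pi (by linarith) (by linarith)
  have hsin₂ : 0 ≤ sin (θ - α) := sin_nonneg_of_nonneg_of_le_pi (by linarith) (by linarith)
  have hle : sin (β - α) * h θ ≤ sin (β - α) * ⟪x, u θ⟫ := by
    rw [← hzθ, sin_sub_mul_inner_u z θ α β, sin_sub_mul_inner_u x θ α β, hα, hβ]
    gcongr
    · exact hK.inner_le hz α
    · exact hK.inner_le hz β
  exact le_antisymm (le_of_mul_le_mul_left hle hsin) (hK.inner_le hx θ)

variable (hw : ∀ θ : ℝ, h θ + h (θ + π) = 1)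
include hw

theorem hasDerivAt {x : EuclideanSpace ℝ (Fin 2)} (hx : x ∈ K) {θ : ℝ} (hxθ : ⟪x, u θ⟫ = h θ) :
    HasDerivAt h ⟪x, u' θ⟫ θ := by
  obtain ⟨y, hy, hyθ⟩ := hK.exists_inner_eq (θ + π)
  rw [inner_u_add_pi] at hyθ
  have upper (t : ℝ) : h t ≤ 1 + ⟪y, u t⟫ := by
    have := hK.inner_le hy (t + π)
    rw [inner_u_add_pi] at this
    linarith [hw t]
  refine (hasDerivAt_inner_u x θ).of_eventually_le_of_le ((hasDerivAt_inner_u y θ).const_add 1)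
    (Eventually.of_forall (hK.inner_le hx)) (Eventually.of_forall upper) hxθ ?_
  linarith [hw θ]

theorem gamma_eq {x : EuclideanSpace ℝ (Fin 2)} (hx : x ∈ K) {θ : ℝ} (hxθ : ⟪x, u θ⟫ = h θ) :
    h θ • u θ + deriv h θ • u' θ = x := by
  rw [(hK.hasDerivAt hw hx hxθ).deriv, ← hxθ, inner_u_smul_add_inner_u'_smul]

theorem exists_Ioo_eqOn_inner {x : EuclideanSpace ℝ (Fin 2)} (hx : x ∈ K) {a b θ₀ θ₁ : ℝ}
    (ha : a ∈ Ioo θ₀ θ₁) (hb : b ∈ Ioo θ₀ θ₁) (hab : a < b) (hθ : θ₁ - θ₀ ≤ 2 * π)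
    (hxa : ⟪x, u a⟫ = h a) (hxb : ⟪x, u b⟫ = h b) :
    ∃ c d, c < d ∧ Ioo c d ⊆ Ioo θ₀ θ₁ ∧ EqOn h (fun θ => ⟪x, u θ⟫) (Ioo c d) := by
  rcases lt_trichotomy (b - a) π with hlt | heq | hgt
  · exact ⟨a, b, hab, Ioo_subset_Ioo ha.1.le hb.2.le,
      (hK.eqOn_inner_of_inner_eq hx hab hlt hxa hxb).mono Ioo_subset_Icc_self⟩
  · obtain rfl : b = a + π := by linarith
    have := hw a
    rw [← hxa, ← hxb, inner_u_add_pi] at this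
    linarith
  · -- go round the other way: the arc from `b` to `a + 2π` is shorter than `π`
    have hxa' : ⟪x, u (a + 2 * π)⟫ = h (a + 2 * π) := by rw [u_add_two_pi, hK.periodic, hxa]
    refine ⟨b, θ₁, hb.2, Ioo_subset_Ioo_left hb.1.le,
      (hK.eqOn_inner_of_inner_eq hx (by linarith [ha.1, hb.2]) (by linarith) hxb hxa').mono ?_⟩
    exact Ioo_subset_Icc_self.trans (Icc_subset_Icc_right (by linarith [ha.1]))

end IsSupportFn

theorem constant_width_parametrization_injective_general
    (K : Set (EuclideanSpace ℝ (Fin 2))) (h : ℝ → ℝ) (θ₀ θ₁ : ℝ)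
    (hsupp : IsSupportFn K h)
    (hwidth : ∀ θ : ℝ, h θ + h (θ + π) = 1)
    (hθ₀ : 0 ≤ θ₀) (hθ₁ : θ₁ ≤ 2 * π)
    (hpos : ∀ᵐ θ : ℝ, θ ∈ Set.Ioo θ₀ θ₁ → 0 < deriv (deriv h) θ + h θ) :
    Set.InjOn (fun θ : ℝ => h θ • u θ + deriv h θ • u' θ) (Set.Ioo θ₀ θ₁) := by
  intro a ha b hb hγ
  wlog hab : a < b generalizing a b
  · rcases (not_lt.1 hab).eq_or_lt with rfl | hba
    · rfl
    · exact (this hb ha hγ.symm hba).symm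
  exfalso
  obtain ⟨x, hx, hxa⟩ := hsupp.exists_inner_eq a
  obtain ⟨y, hy, hyb⟩ := hsupp.exists_inner_eq b
  obtain rfl : x = y := by
    rw [← hsupp.gamma_eq hwidth hx hxa, ← hsupp.gamma_eq hwidth hy hyb]
    exact hγ
  obtain ⟨c, d, hcd, hsub, heq⟩ :=
    hsupp.exists_Ioo_eqOn_inner hwidth hx ha hb hab (by linarith) hxa hyb
  obtain ⟨θ, hθ, hpθ⟩ := exists_mem_Ioo_of_ae_imp hpos hcd hsub
  exact hpθ.ne' (deriv_deriv_add_eq_zero_of_eqOn isOpen_Ioo heq hθ)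

/-- For a convex body `K` of constant width 1 with support function `h`, the boundary
parametrization `γ(θ) = h(θ) u(θ) + h'(θ) u'(θ)` is injective on any interval
`(θ₀, θ₁) ⊆ [0, 2π]` on which `h'' + h > 0` almost everywhere. -/
theorem constant_width_parametrization_injective
    (K : Set (EuclideanSpace ℝ (Fin 2))) (h : ℝ → ℝ) (θ₀ θ₁ : ℝ)
    (hne : K.Nonempty) (hcomp : IsCompact K) (hconv : Convex ℝ K)
    (hsupp : IsSupportFn K h)
    (hwidth : ∀ θ : ℝ, h θ + h (θ + π) = 1)
    (hθ₀ : 0 ≤ θ₀) (hθ₁ : θ₁ ≤ 2 * π)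
    (hpos : ∀ᵐ θ : ℝ, θ ∈ Set.Ioo θ₀ θ₁ → 0 < deriv (deriv h) θ + h θ) :
    Set.InjOn (fun θ : ℝ => h θ • u θ + deriv h θ • u' θ) (Set.Ioo θ₀ θ₁) :=
  constant_width_parametrization_injective_general K h θ₀ θ₁ hsupp hwidth hθ₀ hθ₁ hpos
end
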